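/- Suppose (A,J) is a strictly dense pair (S_{A,J[B]} > 1 for all A ⊊ B ⊆ V_J), where scalings are computed with p = n^{−(v_H−2)/(e_H−1)}, n > 1 and integers v_H, e_H ≥ 3. Suppose a,b are vertices of J with ab ∉ E_J and {a,b} ⊄ A, and let J′ = J ∪ {ab}. Then max over all B with A ⊆ B ⊆ V_{J′} of S_{B,J′} is strictly less than S_{A,J}; in fact it is at most n^{−1/(e_H−1)} S_{A,J}. -/

import Mathlib

/-
For `A ⊆ B` the scalings factor as `S_{A,J} = S_{A,J[B]} · S_{B,J}`, and adding the edge `ab`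
multiplies `S_{B,·}` by `p` unless both `a` and `b` lie in `B`. If they do, then `A ⊊ B`, so
`S_{A,J[B]} > 1`; being an integer power of `n^{1/(e_H-1)}`, it is at least `n^{1/(e_H-1)}`, and
`S_{B,J'} = S_{B,J} ≤ n^{-1/(e_H-1)} S_{A,J}`. Otherwise `S_{A,J[B]} ≥ 1` and
`S_{B,J'} = p S_{B,J} ≤ p S_{A,J}`, where `p ≤ n^{-1/(e_H-1)}` because `v_H ≥ 3`.
-/

open SimpleGraph Set

/-- `S_{A,Γ} = p^(e_Γ - e_{Γ[A]}) * n^(v_Γ - |A|)`, the extension scaling. -/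
noncomputable def scalingPair {V : Type*} [Fintype V] (n p : ℝ)
    (Γ : SimpleGraph V) (A : Set V) : ℝ :=
  p ^ (Γ.edgeSet.ncard - (Γ.induce A).edgeSet.ncard) *
    n ^ (Fintype.card V - A.ncard)

/-- `S_{A,Γ[B]}`, the extension scaling within the induced subgraph on `B`. -/
noncomputable def scalingInd {V : Type*} [Fintype V] (n p : ℝ)
    (Γ : SimpleGraph V) (A B : Set V) : ℝ :=
  p ^ ((Γ.induce B).edgeSet.ncard - (Γ.induce A).edgeSet.ncard) *
    n ^ (B.ncard - A.ncard)

namespace SimpleGraph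

lemma ncard_edgeSet_comap_le {V W : Type*} [Finite W] (G : SimpleGraph W) {f : V → W}
    (hf : Function.Injective f) : (G.comap f).edgeSet.ncard ≤ G.edgeSet.ncard := by
  refine Set.ncard_le_ncard_of_injOn (Sym2.map f) ?_ (Sym2.map.injective hf).injOn
  intro e he
  induction e using Sym2.ind with
  | _ x y => simpa using he

lemma ncard_edgeSet_sup_edge {V : Type*} [Finite V] (G : SimpleGraph V) {s t : V}
    (hne : s ≠ t) (hn : ¬G.Adj s t) : (G ⊔ edge s t).edgeSet.ncard = G.edgeSet.ncard + 1 := by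
  rw [edgeSet_sup, edgeSet_edge_of_ne hne, Set.union_singleton,
    Set.ncard_insert_of_notMem (by simpa using hn)]

variable {V : Type*} (G : SimpleGraph V) {s t : V} {B : Set V}

lemma induce_sup_edge_of_mem (hs : s ∈ B) (ht : t ∈ B) :
    (G ⊔ edge s t).induce B = G.induce B ⊔ edge ⟨s, hs⟩ ⟨t, ht⟩ := by
  ext x y
  simp [edge_adj, Subtype.ext_iff]

lemma induce_sup_edge_of_notMem (h : ¬(s ∈ B ∧ t ∈ B)) :
    (G ⊔ edge s t).induce B = G.induce B := by
  ext x y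
  simp only [comap_adj, Function.Embedding.coe_subtype, sup_adj, edge_adj, or_iff_left_iff_imp]
  rintro ⟨⟨rfl, rfl⟩ | ⟨rfl, rfl⟩, -⟩
  exacts [absurd ⟨x.2, y.2⟩ h, absurd ⟨y.2, x.2⟩ h]

end SimpleGraph

section Scaling

variable {V : Type*} [Fintype V] (n p : ℝ) (Γ : SimpleGraph V) {A B : Set V}

lemma ncard_edgeSet_induce_le (B : Set V) : (Γ.induce B).edgeSet.ncard ≤ Γ.edgeSet.ncard :=
  Γ.ncard_edgeSet_comap_le Subtype.val_injective

lemma ncard_edgeSet_induce_mono (h : A ⊆ B) :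
    (Γ.induce A).edgeSet.ncard ≤ (Γ.induce B).edgeSet.ncard :=
  (Γ.induce B).ncard_edgeSet_comap_le (Set.inclusion_injective h)

lemma scalingPair_pos (hn : 0 < n) (hp : 0 < p) (A : Set V) :
    0 < scalingPair n p Γ A := by
  unfold scalingPair
  positivity

@[simp]
lemma scalingInd_self (A : Set V) : scalingInd n p Γ A A = 1 := by
  simp [scalingInd]

lemma scalingPair_eq_scalingInd_mul (h : A ⊆ B) :
    scalingPair n p Γ A = scalingInd n p Γ A B * scalingPair n p Γ B := by
  have hAB := ncard_edgeSet_induce_mono Γ h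
  have hB := ncard_edgeSet_induce_le Γ B
  have hcAB := Set.ncard_le_ncard h
  have hcB : B.ncard ≤ Fintype.card V := by
    simpa using Set.ncard_le_ncard (Set.subset_univ B)
  rw [scalingPair, scalingInd, scalingPair, mul_mul_mul_comm, ← pow_add, ← pow_add]
  congr 2 <;> omega

variable {a b : V}

lemma scalingPair_sup_edge_of_mem (hab : a ≠ b) (hn : ¬Γ.Adj a b) (ha : a ∈ B) (hb : b ∈ B) :
    scalingPair n p (Γ ⊔ edge a b) B = scalingPair n p Γ B := by
  have hnB : ¬(Γ.induce B).Adj ⟨a, ha⟩ ⟨b, hb⟩ := hn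
  rw [scalingPair, scalingPair, Γ.ncard_edgeSet_sup_edge hab hn, Γ.induce_sup_edge_of_mem ha hb,
    (Γ.induce B).ncard_edgeSet_sup_edge (by simpa using hab) hnB, Nat.add_sub_add_right]

lemma scalingPair_sup_edge_of_notMem (hab : a ≠ b) (hn : ¬Γ.Adj a b) (h : ¬(a ∈ B ∧ b ∈ B)) :
    scalingPair n p (Γ ⊔ edge a b) B = p * scalingPair n p Γ B := by
  rw [scalingPair, scalingPair, Γ.ncard_edgeSet_sup_edge hab hn, Γ.induce_sup_edge_of_notMem h,
    Nat.sub_add_comm (ncard_edgeSet_induce_le Γ B), pow_succ]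
  ring

end Scaling

lemma rpow_neg_div_pow_mul_pow_eq_zpow {n : ℝ} (hn : 0 < n) {k d : ℕ} (hd : d ≠ 0) (e v : ℕ) :
    (n ^ (-(k / d : ℝ))) ^ e * n ^ v = (n ^ (1 / d : ℝ)) ^ ((d * v - k * e : ℤ)) := by
  rw [← Real.rpow_intCast, ← Real.rpow_natCast, ← Real.rpow_natCast, ← Real.rpow_mul hn.le,
    ← Real.rpow_mul hn.le, ← Real.rpow_add hn]
  congr 1
  push_cast
  field_simp
  ring

lemma rpow_one_div_le_scalingInd {V : Type*} [Fintype V] {n p : ℝ} (hn : 1 < n) {k d : ℕ}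
    (hd : d ≠ 0) (hp : p = n ^ (-(k / d : ℝ))) (Γ : SimpleGraph V) {A B : Set V}
    (h : 1 < scalingInd n p Γ A B) : n ^ (1 / d : ℝ) ≤ scalingInd n p Γ A B := by
  have hq : 1 < n ^ (1 / d : ℝ) := Real.one_lt_rpow hn (by positivity)
  rw [scalingInd, hp, rpow_neg_div_pow_mul_pow_eq_zpow (by positivity) hd] at h ⊢
  rw [one_lt_zpow_iff_right₀ hq] at h
  calc n ^ (1 / d : ℝ) = (n ^ (1 / d : ℝ)) ^ (1 : ℤ) := (zpow_one _).symm
    _ ≤ _ := (zpow_le_zpow_iff_right₀ hq).2 h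

lemma scalingPair_sup_edge_le {V : Type*} [Fintype V] {n p : ℝ} (hn : 1 < n) {k d : ℕ}
    (hk : 1 ≤ k) (hd : d ≠ 0) (hp : p = n ^ (-(k / d : ℝ))) {Γ : SimpleGraph V} {A B : Set V}
    (hdense : ∀ C : Set V, A ⊂ C → 1 < scalingInd n p Γ A C) {a b : V} (hab : a ≠ b)
    (hnadj : ¬Γ.Adj a b) (hnotA : ¬({a, b} : Set V) ⊆ A) (hAB : A ⊆ B) :
    scalingPair n p (Γ ⊔ edge a b) B ≤ (n ^ (1 / d : ℝ))⁻¹ * scalingPair n p Γ A := by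
  have hpq : p ≤ (n ^ (1 / d : ℝ))⁻¹ := by
    rw [hp, ← Real.rpow_neg (by positivity)]
    refine Real.rpow_le_rpow_of_exponent_le hn.le (neg_le_neg (div_le_div_of_nonneg_right ?_ ?_))
    · exact_mod_cast hk
    · positivity
  have hsplit := scalingPair_eq_scalingInd_mul n p Γ hAB
  have hB : 0 < scalingPair n p Γ B :=
    scalingPair_pos n p Γ (by positivity) (by rw [hp]; positivity) B
  by_cases hmem : a ∈ B ∧ b ∈ B
  · have hss : A ⊂ B := ssubset_of_subset_not_subset hAB fun hBA =>
      hnotA (insert_subset (hBA hmem.1) (singleton_subset_iff.2 (hBA hmem.2)))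
    have hqS := rpow_one_div_le_scalingInd hn hd hp Γ (hdense B hss)
    rw [scalingPair_sup_edge_of_mem n p Γ hab hnadj hmem.1 hmem.2, hsplit, ← mul_assoc]
    exact le_mul_of_one_le_left hB.le ((one_le_inv_mul₀ (by positivity)).2 hqS)
  · have hS : 1 ≤ scalingInd n p Γ A B := by
      rcases hAB.eq_or_ssubset with rfl | hss
      · simp
      · exact (hdense B hss).le
    rw [scalingPair_sup_edge_of_notMem n p Γ hab hnadj hmem, hsplit]
    calc p * scalingPair n p Γ B ≤ (n ^ (1 / d : ℝ))⁻¹ * scalingPair n p Γ B := by gcongr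
      _ ≤ _ := by gcongr; exact le_mul_of_one_le_left hB.le hS

theorem stmt_9_general {V : Type*} [Fintype V] (vH eH : ℕ)
    (hv : 3 ≤ vH) (he : 3 ≤ eH) (n : ℝ) (hn : 1 < n) (p : ℝ)
    (hp : p = n ^ (-(((vH : ℝ) - 2) / ((eH : ℝ) - 1))))
    (J : SimpleGraph V) (A : Set V)
    (hdense : ∀ B : Set V, A ⊂ B → 1 < scalingInd n p J A B)
    (a b : V) (hab : a ≠ b) (hnadj : ¬ J.Adj a b)
    (hnotA : ¬ ({a, b} : Set V) ⊆ A) :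
    ∀ B : Set V, A ⊆ B →
      scalingPair n p (J ⊔ SimpleGraph.fromEdgeSet {s(a, b)}) B
          ≤ n ^ (-(1 : ℝ) / ((eH : ℝ) - 1)) * scalingPair n p J A ∧
      scalingPair n p (J ⊔ SimpleGraph.fromEdgeSet {s(a, b)}) B
          < scalingPair n p J A := by
  obtain ⟨k, rfl⟩ : ∃ k, vH = k + 2 := ⟨vH - 2, by omega⟩
  obtain ⟨d, rfl⟩ : ∃ d, eH = d + 1 := ⟨eH - 1, by omega⟩
  simp only [Nat.cast_add, Nat.cast_ofNat, Nat.cast_one, add_sub_cancel_right] at hp ⊢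
  rw [neg_div, Real.rpow_neg (by positivity)]
  have hd : d ≠ 0 := by omega
  intro B hAB
  have key := scalingPair_sup_edge_le hn (by omega) hd hp hdense hab hnadj hnotA hAB
  have hA : 0 < scalingPair n p J A :=
    scalingPair_pos n p J (by positivity) (by rw [hp]; positivity) A
  have hq : 1 < n ^ (1 / d : ℝ) := Real.one_lt_rpow hn (by positivity)
  exact ⟨key, key.trans_lt (mul_lt_of_lt_one_left hA (inv_lt_one_of_one_lt₀ hq))⟩

theorem stmt_9 {V : Type*} [Fintype V] [DecidableEq V] (vH eH : ℕ)
    (hv : 3 ≤ vH) (he : 3 ≤ eH) (n : ℝ) (hn : 1 < n) (p : ℝ)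
    (hp : p = n ^ (-(((vH : ℝ) - 2) / ((eH : ℝ) - 1))))
    (J : SimpleGraph V) (A : Set V)
    (hdense : ∀ B : Set V, A ⊂ B → 1 < scalingInd n p J A B)
    (a b : V) (hab : a ≠ b) (hnadj : ¬ J.Adj a b)
    (hnotA : ¬ ({a, b} : Set V) ⊆ A) :
    ∀ B : Set V, A ⊆ B →
      scalingPair n p (J ⊔ SimpleGraph.fromEdgeSet {s(a, b)}) B
          ≤ n ^ (-(1 : ℝ) / ((eH : ℝ) - 1)) * scalingPair n p J A ∧
      scalingPair n p (J ⊔ SimpleGraph.fromEdgeSet {s(a, b)}) B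
          < scalingPair n p J A :=
  stmt_9_general vH eH hv he n hn p hp J A hdense a b hab hnadj hnotA
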